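/- arXiv:1506.06184 — 2 statements merged into one kernel-verified Lean document; each statement's English description precedes it below -/
import Mathlib

section
/- For a closed subset Γ of Φ, the pattern subgroup M(Γ) is abelian if and only if Γ contains no chain, i.e., there are no (α,β),(β,γ) both in Γ. -/
namespace McLain

/-- The endomorphism ring of the free right `R`-module on `Λ`. -/
abbrev E (R : Type*) [Ring R] (Λ : Type*) := Module.End Rᵐᵒᵖ (Λ →₀ R)

/-- Left multiplication by `r`, as an endomorphism of the right `R`-module `R`. -/
def lmul {R : Type*} [Ring R] (r : R) : R →ₗ[Rᵐᵒᵖ] R where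
  toFun s := r * s
  map_add' := fun a b => mul_add r a b
  map_smul' := fun m s => by
    simp [MulOpposite.smul_eq_mul_unop, mul_assoc]

/-- The endomorphism corresponding to `r e_{αβ}`. -/
noncomputable def elt {R : Type*} [Ring R] {Λ : Type*} (α β : Λ) (r : R) : E R Λ :=
  (Finsupp.lsingle α).comp ((lmul r).comp (Finsupp.lapply β))

/-- The unit `1 + r e_{αβ}` of `E`, for `α < β` (its inverse is `1 - r e_{αβ}`). -/
noncomputable def rootUnit {R : Type*} [Ring R] {Λ : Type*} [PartialOrder Λ]
    {α β : Λ} (h : α < β) (r : R) : (E R Λ)ˣ where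
  val := 1 + elt α β r
  inv := 1 + elt α β (-r)
  val_inv := by
    apply LinearMap.ext; intro x
    simp [elt, lmul, Module.End.mul_apply, Finsupp.single_apply, h.ne, mul_add, add_assoc]
  inv_val := by
    apply LinearMap.ext; intro x
    simp [elt, lmul, Module.End.mul_apply, Finsupp.single_apply, h.ne, mul_add, add_assoc]

/-- The pattern subgroup `M(Γ) = ⟨M_{αβ} : (α,β) ∈ Γ⟩`. -/
noncomputable def patternSubgroup (R : Type*) [Ring R] (Λ : Type*) [PartialOrder Λ]
    (Γ : Set (Λ × Λ)) : Subgroup (E R Λ)ˣ :=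
  Subgroup.closure {u | ∃ (α β : Λ) (h : α < β), (α, β) ∈ Γ ∧ ∃ r : R, u = rootUnit h r}


/-- A subset `Γ ⊆ Φ` is closed if `(α,β),(β,γ) ∈ Γ` implies `(α,γ) ∈ Γ`. -/
def IsClosedSubset {Λ : Type*} [PartialOrder Λ] (Γ : Set (Λ × Λ)) : Prop :=
  ∀ α β γ : Λ, (α, β) ∈ Γ → (β, γ) ∈ Γ → (α, γ) ∈ Γ

/-!
Two root units `1 + r e_{αβ}` and `1 + s e_{γδ}` commute exactly when `e_{αβ}` and `e_{γδ}` do,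
and `e_{αβ} e_{γδ}` is `e_{αδ}` if `β = γ` and `0` otherwise. So the generators of `M(Γ)` commute
pairwise unless `Γ` contains a chain `(α,β),(β,γ)`, in which case the two products of
`1 + e_{αβ}` and `1 + e_{βγ}` differ by `e_{αγ} ≠ 0`; and a group generated by pairwise
commuting elements is abelian.
-/

theorem _root_.Subgroup.isMulCommutative_closure_iff {G : Type*} [Group G] {k : Set G} :
    IsMulCommutative (Subgroup.closure k) ↔ ∀ x ∈ k, ∀ y ∈ k, x * y = y * x :=
  ⟨fun _ _ hx _ hy => setLike_mul_comm (Subgroup.subset_closure hx) (Subgroup.subset_closure hy),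
    Subgroup.isMulCommutative_closure⟩

theorem _root_.commute_one_add_one_add_iff {A : Type*} [Ring A] {a b : A} :
    Commute (1 + a) (1 + b) ↔ Commute a b := by
  have key : (1 + a) * (1 + b) - (1 + b) * (1 + a) = a * b - b * a := by noncomm_ring
  rw [Commute, SemiconjBy, Commute, SemiconjBy, ← sub_eq_zero, key, sub_eq_zero]

section Elt

variable {R : Type*} [Ring R] {Λ : Type*}

theorem elt_mul_elt_self (α β γ : Λ) (r s : R) :
    (elt α β r : E R Λ) * elt β γ s = elt α γ (r * s) := by
  ext
  simp [elt, lmul, mul_assoc]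

theorem elt_mul_elt_of_ne {α β γ δ : Λ} (h : β ≠ γ) (r s : R) :
    (elt α β r : E R Λ) * elt γ δ s = 0 := by
  ext
  simp [elt, lmul, h.symm]

theorem elt_one_ne_zero [Nontrivial R] (α β : Λ) : (elt α β (1 : R) : E R Λ) ≠ 0 := by
  intro h
  simpa [elt, lmul] using congr($h (Finsupp.single β 1))

variable [PartialOrder Λ]

theorem commute_rootUnit_iff {α β γ δ : Λ} (hαβ : α < β) (hγδ : γ < δ) (r s : R) :
    Commute (rootUnit hαβ r) (rootUnit hγδ s) ↔ Commute (elt α β r) (elt γ δ s) :=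
  Commute.units_val_iff.symm.trans
    (commute_one_add_one_add_iff (a := elt α β r) (b := elt γ δ s))

theorem commute_rootUnit {α β γ δ : Λ} (hαβ : α < β) (hγδ : γ < δ) (hβγ : β ≠ γ) (hδα : δ ≠ α)
    (r s : R) : Commute (rootUnit hαβ r) (rootUnit hγδ s) := by
  rw [commute_rootUnit_iff, Commute, SemiconjBy, elt_mul_elt_of_ne hβγ, elt_mul_elt_of_ne hδα]

theorem not_commute_rootUnit_one [Nontrivial R] {α β γ : Λ} (hαβ : α < β) (hβγ : β < γ) :
    ¬Commute (rootUnit hαβ (1 : R)) (rootUnit hβγ 1) := by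
  rw [commute_rootUnit_iff, Commute, SemiconjBy, elt_mul_elt_self,
    elt_mul_elt_of_ne (hαβ.trans hβγ).ne', mul_one]
  exact elt_one_ne_zero α γ

end Elt

theorem patternSubgroup_isCommutative_iff_general (R : Type*) [Ring R] [Nontrivial R]
    (Λ : Type*) [PartialOrder Λ] (Γ : Set (Λ × Λ))
    (hΦ : Γ ⊆ {p : Λ × Λ | p.1 < p.2}) :
    IsMulCommutative (patternSubgroup R Λ Γ) ↔
      ∀ α β γ : Λ, (α, β) ∈ Γ → (β, γ) ∈ Γ → False := by
  rw [patternSubgroup, Subgroup.isMulCommutative_closure_iff]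
  constructor
  · intro hcomm α β γ hαβ hβγ
    exact not_commute_rootUnit_one (R := R) (hΦ hαβ) (hΦ hβγ)
      (hcomm _ ⟨α, β, _, hαβ, 1, rfl⟩ _ ⟨β, γ, _, hβγ, 1, rfl⟩)
  · rintro hchain _ ⟨α, β, hαβ, hαβΓ, r, rfl⟩ _ ⟨γ, δ, hγδ, hγδΓ, s, rfl⟩
    exact commute_rootUnit hαβ hγδ (fun h => hchain α β δ hαβΓ (h ▸ hγδΓ))
      (fun h => hchain γ δ β hγδΓ (h ▸ hαβΓ)) r s

/-- For a closed `Γ ⊆ Φ`, the pattern subgroup `M(Γ)` is abelian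
if and only if `Γ` contains no chain `(α,β),(β,γ)`. -/
theorem patternSubgroup_isCommutative_iff (R : Type*) [Ring R] [Nontrivial R]
    (Λ : Type*) [PartialOrder Λ] (Γ : Set (Λ × Λ))
    (hΦ : Γ ⊆ {p : Λ × Λ | p.1 < p.2}) (hΓ : IsClosedSubset Γ) :
    IsMulCommutative (patternSubgroup R Λ Γ) ↔
      ∀ α β γ : Λ, (α, β) ∈ Γ → (β, γ) ∈ Γ → False :=
  patternSubgroup_isCommutative_iff_general R Λ Γ hΦ

end McLain
end

section
/- Suppose ≤ is a total order on Λ and Γ ⊆ Φ is closed. Then the commutator subgroup of the pattern subgroup M(Γ) equals M([Γ,Γ]), where [Γ,Γ] is the set of (α,β) ∈ Φ such that there is a chain (γ₁,γ₂),…,(γ_{n-1},γ_n) ∈ Γ with n ≥ 3, γ₁ = α and γ_n = β. -/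
/-!
For `α < β < γ` the generators `x_{αβ}(r) = 1 + r e_{αβ}` satisfy
`⁅x_{αβ}(r), x_{βγ}(s)⁆ = x_{αγ}(rs)`, and `x_{αβ}(r)`, `x_{γδ}(s)` commute when `β ≠ γ` and
`δ ≠ α`. So the commutator of two generators of `M(Γ)` lies in `M([Γ,Γ])`; as `[Γ,Γ] ⊆ Γ` for
closed `Γ`, the generators of `M(Γ)` also normalize `M([Γ,Γ])`, and a group generated by elements
that normalize `N` and commute pairwise modulo `N` has its commutator subgroup inside `N`.
Conversely, for closed `Γ` every pair of `[Γ,Γ]` is already joined by a chain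
`(α,β), (β,γ)` of length two, and then `x_{αγ}(r) = ⁅x_{αβ}(r), x_{βγ}(1)⁆`.
-/

namespace McLain

/-- `[Γ,Γ]`: the set of `(α,β)` joined by a chain of at least two links of `Γ`,
i.e. there are `γ₁,…,γ_n` with `n ≥ 3`, `γ₁ = α`, `γ_n = β` and each
`(γ_i, γ_{i+1}) ∈ Γ`. -/
def chainSet {Λ : Type*} (Γ : Set (Λ × Λ)) : Set (Λ × Λ) :=
  {p | ∃ (n : ℕ) (c : Fin (n + 3) → Λ), c 0 = p.1 ∧ c (Fin.last (n + 2)) = p.2 ∧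
    ∀ i : Fin (n + 2), (c i.castSucc, c i.succ) ∈ Γ}

end McLain

namespace Subgroup

open scoped commutatorElement

variable {G : Type*} [Group G]

def centralizerModulo (N : Subgroup G) (T : Set G) : Subgroup G where
  carrier := {g | g ∈ normalizer (N : Set G) ∧ ∀ t ∈ T, ⁅g, t⁆ ∈ N}
  one_mem' := ⟨one_mem _, fun t _ => by simpa only [commutatorElement_one_left] using one_mem N⟩
  mul_mem' := by
    rintro x y ⟨hx, hxT⟩ ⟨hy, hyT⟩
    refine ⟨mul_mem hx hy, fun t ht => ?_⟩
    have hxy : ⁅x * y, t⁆ = x * ⁅y, t⁆ * x⁻¹ * ⁅x, t⁆ := by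
      simp only [commutatorElement_def]; group
    rw [hxy]
    exact mul_mem ((mem_normalizer_iff.1 hx _).1 (hyT t ht)) (hxT t ht)
  inv_mem' := by
    rintro x ⟨hx, hxT⟩
    refine ⟨inv_mem hx, fun t ht => ?_⟩
    have hinv : ⁅x⁻¹, t⁆ = x⁻¹ * ⁅x, t⁆⁻¹ * x := by
      simp only [commutatorElement_def]; group
    rw [hinv]
    exact (mem_normalizer_iff''.1 hx _).1 (inv_mem (hxT t ht))

theorem mem_centralizerModulo {N : Subgroup G} {T : Set G} {g : G} :
    g ∈ centralizerModulo N T ↔ g ∈ normalizer (N : Set G) ∧ ∀ t ∈ T, ⁅g, t⁆ ∈ N :=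
  Iff.rfl

theorem commutator_closure_le {S : Set G} {N : Subgroup G}
    (hS : closure S ≤ normalizer (N : Set G)) (hcomm : ∀ s ∈ S, ∀ t ∈ S, ⁅s, t⁆ ∈ N) :
    ⁅closure S, closure S⁆ ≤ N := by
  have hS_left : closure S ≤ centralizerModulo N S :=
    (closure_le _).2 fun s hs => mem_centralizerModulo.2 ⟨hS (subset_closure hs), hcomm s hs⟩
  have hS_right : closure S ≤ centralizerModulo N (closure S) :=
    (closure_le _).2 fun s hs => mem_centralizerModulo.2 ⟨hS (subset_closure hs), fun g hg => by
      rw [← commutatorElement_inv]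
      exact inv_mem ((mem_centralizerModulo.1 (hS_left hg)).2 s hs)⟩
  exact commutator_le.2 fun g hg g' hg' => (mem_centralizerModulo.1 (hS_right hg)).2 g' hg'

theorem closure_le_normalizer_closure {S T : Set G} (hS : ∀ s ∈ S, s⁻¹ ∈ S)
    (hcomm : ∀ s ∈ S, ∀ t ∈ T, ⁅s, t⁆ ∈ closure T) :
    closure S ≤ normalizer (closure T : Set G) := by
  have hconj : ∀ s ∈ S, ∀ n ∈ closure T, s * n * s⁻¹ ∈ closure T := fun s hs =>
    (closure_le ((closure T).comap (MulAut.conj s).toMonoidHom)).2 fun t ht => by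
      simpa [commutatorElement_def] using mul_mem (hcomm s hs t ht) (subset_closure ht)
  refine (closure_le _).2 fun s hs => mem_normalizer_iff.2 fun n => ⟨hconj s hs n, fun hn => ?_⟩
  simpa [mul_assoc] using hconj s⁻¹ (hS s hs) _ hn

end Subgroup

namespace McLain

open scoped commutatorElement

section RootUnits

variable {R : Type*} [Ring R] {Λ : Type*}

theorem elt_mul_elt [DecidableEq Λ] (α β γ δ : Λ) (r s : R) :
    (elt α β r : E R Λ) * elt γ δ s = if β = γ then elt α δ (r * s) else 0 := by
  ext x
  split_ifs with h
  · subst h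
    simp [elt, lmul, Module.End.mul_apply, mul_assoc]
  · simp [elt, lmul, Module.End.mul_apply, Finsupp.single_apply, h]

variable [PartialOrder Λ]

theorem val_rootUnit {α β : Λ} (h : α < β) (r : R) :
    ((rootUnit h r : (E R Λ)ˣ) : E R Λ) = 1 + elt α β r := rfl

theorem rootUnit_inv {α β : Λ} (h : α < β) (r : R) :
    (rootUnit h r : (E R Λ)ˣ)⁻¹ = rootUnit h (-r) :=
  Units.ext rfl

theorem commutator_rootUnit_rootUnit {α β γ : Λ} (h₁ : α < β) (h₂ : β < γ) (r s : R) :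
    ⁅(rootUnit h₁ r : (E R Λ)ˣ), rootUnit h₂ s⁆ = rootUnit (h₁.trans h₂) (r * s) := by
  classical
  rw [commutatorElement_def, mul_inv_eq_iff_eq_mul, mul_inv_eq_iff_eq_mul]
  ext1
  simp only [Units.val_mul, val_rootUnit, mul_add, add_mul, one_mul, mul_one, elt_mul_elt,
    h₂.ne', (h₁.trans h₂).ne', if_true, if_false, add_zero]
  abel

theorem commutator_rootUnit_rootUnit' {α β γ : Λ} (h₁ : α < β) (h₂ : γ < α) (r s : R) :
    ⁅(rootUnit h₁ r : (E R Λ)ˣ), rootUnit h₂ s⁆ = rootUnit (h₂.trans h₁) (-(s * r)) := by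
  rw [← commutatorElement_inv, commutator_rootUnit_rootUnit, rootUnit_inv]

theorem commutator_rootUnit_rootUnit_eq_one {α β γ δ : Λ} (h₁ : α < β) (h₂ : γ < δ)
    (hβγ : β ≠ γ) (hδα : δ ≠ α) (r s : R) :
    ⁅(rootUnit h₁ r : (E R Λ)ˣ), rootUnit h₂ s⁆ = 1 := by
  classical
  rw [commutatorElement_eq_one_iff_mul_comm]
  ext1
  simp only [Units.val_mul, val_rootUnit, mul_add, add_mul, one_mul, mul_one, elt_mul_elt, hβγ,
    hδα, if_false, add_zero]
  abel

end RootUnits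

section Chains

variable {Λ : Type*} {Γ : Set (Λ × Λ)}

theorem mem_chainSet_of_mem_of_mem {α β γ : Λ} (h₁ : (α, β) ∈ Γ) (h₂ : (β, γ) ∈ Γ) :
    (α, γ) ∈ chainSet Γ := by
  refine ⟨0, ![α, β, γ], rfl, rfl, fun i => ?_⟩
  fin_cases i <;> assumption

variable [PartialOrder Λ]

theorem IsClosedSubset.mem_of_chain (hΓ : IsClosedSubset Γ) :
    ∀ {n : ℕ} (c : Fin (n + 2) → Λ), (∀ i : Fin (n + 1), (c i.castSucc, c i.succ) ∈ Γ) →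
      (c 0, c (Fin.last (n + 1))) ∈ Γ
  | 0, c, hc => hc 0
  | n + 1, c, hc => by
    have hinit : (c 0, c (Fin.last (n + 1)).castSucc) ∈ Γ :=
      hΓ.mem_of_chain (fun i => c i.castSucc) fun i => hc i.castSucc
    have hlast := hc (Fin.last (n + 1))
    exact hΓ _ _ _ hinit hlast

theorem IsClosedSubset.mem_chainSet_iff (hΓ : IsClosedSubset Γ) {α γ : Λ} :
    (α, γ) ∈ chainSet Γ ↔ ∃ β, (α, β) ∈ Γ ∧ (β, γ) ∈ Γ := by
  refine ⟨?_, fun ⟨β, h₁, h₂⟩ => mem_chainSet_of_mem_of_mem h₁ h₂⟩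
  rintro ⟨n, c, hc0, hclast, hc⟩
  refine ⟨c 1, by simpa [hc0] using hc 0, ?_⟩
  simpa [hclast] using hΓ.mem_of_chain (fun i => c i.succ) fun i => hc i.succ

theorem IsClosedSubset.chainSet_subset (hΓ : IsClosedSubset Γ) : chainSet Γ ⊆ Γ := by
  rintro ⟨α, γ⟩ h
  obtain ⟨β, h₁, h₂⟩ := hΓ.mem_chainSet_iff.1 h
  exact hΓ _ _ _ h₁ h₂

end Chains

section PatternSubgroups

open Subgroup

variable {R : Type*} [Ring R] {Λ : Type*} [PartialOrder Λ] {Γ : Set (Λ × Λ)}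

variable (R) in
def rootUnits (Γ : Set (Λ × Λ)) : Set (E R Λ)ˣ :=
  {u | ∃ (α β : Λ) (h : α < β), (α, β) ∈ Γ ∧ ∃ r : R, u = rootUnit h r}

theorem rootUnits_mono {Γ' : Set (Λ × Λ)} (h : Γ ⊆ Γ') : rootUnits R Γ ⊆ rootUnits R Γ' := by
  rintro _ ⟨α, β, hαβ, hΓ, r, rfl⟩
  exact ⟨α, β, hαβ, h hΓ, r, rfl⟩

theorem inv_mem_rootUnits {u : (E R Λ)ˣ} (hu : u ∈ rootUnits R Γ) : u⁻¹ ∈ rootUnits R Γ := by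
  obtain ⟨α, β, hαβ, hΓ, r, rfl⟩ := hu
  exact ⟨α, β, hαβ, hΓ, -r, rootUnit_inv hαβ r⟩

theorem rootUnit_mem_patternSubgroup {α β : Λ} (h : α < β) (hΓ : (α, β) ∈ Γ) (r : R) :
    rootUnit h r ∈ patternSubgroup R Λ Γ :=
  subset_closure ⟨α, β, h, hΓ, r, rfl⟩

theorem commutator_mem_patternSubgroup_chainSet {u v : (E R Λ)ˣ} (hu : u ∈ rootUnits R Γ)
    (hv : v ∈ rootUnits R Γ) : ⁅u, v⁆ ∈ patternSubgroup R Λ (chainSet Γ) := by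
  classical
  obtain ⟨α, β, hαβ, hΓαβ, r, rfl⟩ := hu
  obtain ⟨γ, δ, hγδ, hΓγδ, s, rfl⟩ := hv
  by_cases hβγ : β = γ
  · subst hβγ
    rw [commutator_rootUnit_rootUnit]
    exact rootUnit_mem_patternSubgroup _ (mem_chainSet_of_mem_of_mem hΓαβ hΓγδ) _
  by_cases hδα : δ = α
  · subst hδα
    rw [commutator_rootUnit_rootUnit']
    exact rootUnit_mem_patternSubgroup _ (mem_chainSet_of_mem_of_mem hΓγδ hΓαβ) _
  rw [commutator_rootUnit_rootUnit_eq_one hαβ hγδ hβγ hδα]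
  exact one_mem _

theorem patternSubgroup_le_normalizer_chainSet (hΓ : IsClosedSubset Γ) :
    patternSubgroup R Λ Γ ≤ normalizer (patternSubgroup R Λ (chainSet Γ) : Set (E R Λ)ˣ) :=
  closure_le_normalizer_closure (fun _ => inv_mem_rootUnits) fun _ hu _ hv =>
    commutator_mem_patternSubgroup_chainSet hu (rootUnits_mono hΓ.chainSet_subset hv)

theorem commutator_patternSubgroup_le (hΓ : IsClosedSubset Γ) :
    ⁅patternSubgroup R Λ Γ, patternSubgroup R Λ Γ⁆ ≤ patternSubgroup R Λ (chainSet Γ) :=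
  commutator_closure_le (patternSubgroup_le_normalizer_chainSet hΓ) fun _ hu _ hv =>
    commutator_mem_patternSubgroup_chainSet hu hv

theorem patternSubgroup_chainSet_le_commutator (hΦ : Γ ⊆ {p : Λ × Λ | p.1 < p.2})
    (hΓ : IsClosedSubset Γ) :
    patternSubgroup R Λ (chainSet Γ) ≤ ⁅patternSubgroup R Λ Γ, patternSubgroup R Λ Γ⁆ := by
  refine (closure_le _).2 ?_
  rintro _ ⟨α, γ, hαγ, hchain, r, rfl⟩
  obtain ⟨β, hαβ, hβγ⟩ := hΓ.mem_chainSet_iff.1 hchain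
  have hfactor : rootUnit hαγ r = ⁅(rootUnit (hΦ hαβ) r : (E R Λ)ˣ), rootUnit (hΦ hβγ) 1⁆ := by
    rw [commutator_rootUnit_rootUnit, mul_one]
  rw [hfactor]
  exact commutator_mem_commutator (rootUnit_mem_patternSubgroup _ hαβ r)
    (rootUnit_mem_patternSubgroup _ hβγ 1)

end PatternSubgroups

theorem commutator_patternSubgroup_general (R : Type*) [Ring R]
    (Λ : Type*) [LinearOrder Λ] (Γ : Set (Λ × Λ))
    (hΦ : Γ ⊆ {p : Λ × Λ | p.1 < p.2}) (hΓ : IsClosedSubset Γ) :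
    ⁅patternSubgroup R Λ Γ, patternSubgroup R Λ Γ⁆ =
      patternSubgroup R Λ (chainSet Γ) :=
  le_antisymm (commutator_patternSubgroup_le hΓ) (patternSubgroup_chainSet_le_commutator hΦ hΓ)

/-- For `≤` total and `Γ ⊆ Φ` closed, the commutator subgroup of the
pattern subgroup `M(Γ)` equals `M([Γ,Γ])`. -/
theorem commutator_patternSubgroup (R : Type*) [Ring R] [Nontrivial R]
    (Λ : Type*) [LinearOrder Λ] (Γ : Set (Λ × Λ))
    (hΦ : Γ ⊆ {p : Λ × Λ | p.1 < p.2}) (hΓ : IsClosedSubset Γ) :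
    ⁅patternSubgroup R Λ Γ, patternSubgroup R Λ Γ⁆ =
      patternSubgroup R Λ (chainSet Γ) :=
  commutator_patternSubgroup_general R Λ Γ hΦ hΓ

end McLain
end
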